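/- arXiv:1307.6174 — 4 statements merged into one kernel-verified Lean document; each statement's English description precedes it below -/
import Mathlib

section
/- Let K be a field, let E be an elliptic curve over K (a Weierstrass curve with nonzero discriminant), and let P be a K-rational point of E of finite order N with N ≥ 4. Then there exist b, c ∈ K and an isomorphism of elliptic curves over K from E to the curve E(b,c) given by y² + (1−c)xy − by = x³ − bx² which maps P to the point (0, 0). -/
/-!
Move `P` to the origin and its tangent line to `y = 0` by the change of coordinates
`(x, y) ↦ (x - x₀, y - y₀ - λ (x - x₀))`, with `λ` the tangent slope at `P`; this kills `a₆` and
`a₄`. The new `a₂` and `a₃` are `x₀ - x(2P)` and `y₀ - y(-P)`, which are nonzero exactly because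
`3P ≠ 0` and `2P ≠ 0`, so a scaling by `u = a₃ / a₂` makes them equal, and a curve with
`a₂ = a₃` and `a₄ = a₆ = 0` is `E(b, c)`.
-/

/-- The Kubert-Tate normal form curve E(b,c) : y^2 + (1-c)xy - by = x^3 - bx^2. -/
def Ebc {K : Type*} [CommRing K] (b c : K) : WeierstrassCurve.Affine K :=
  { a₁ := 1 - c, a₂ := -b, a₃ := -b, a₄ := 0, a₆ := 0 }

open WeierstrassCurve WeierstrassCurve.Affine

namespace WeierstrassCurve

section CommRing

variable {R : Type*} [CommRing R]

lemma eq_Ebc_of_a₂_eq_a₃ {W : Affine R} (h₂₃ : W.a₂ = W.a₃) (h₄ : W.a₄ = 0) (h₆ : W.a₆ = 0) :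
    W = Ebc (-W.a₂) (1 - W.a₁) := by
  ext <;> simp [Ebc, h₂₃, h₄, h₆]

variable {W : Affine R} {x y : R}

lemma variableChange_a₆_eq_zero (h : W.Equation x y) (u : Rˣ) (s : R) :
    ((⟨u, x, s, y⟩ : VariableChange R) • W).a₆ = 0 := by
  rw [equation_iff] at h
  rw [variableChange_a₆]
  linear_combination (-(u⁻¹ : Rˣ) ^ 6 : R) * h

lemma variableChange_a₂_eq_a₃ {u : Rˣ} {s : R}
    (hu : u * (x - W.addX x x s) = y - W.negY x y) :
    ((⟨u, x, s, y⟩ : VariableChange R) • W).a₂ = ((⟨u, x, s, y⟩ : VariableChange R) • W).a₃ := by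
  rw [addX, negY] at hu
  rw [variableChange_a₂, variableChange_a₃]
  have hinv : ((u⁻¹ : Rˣ) : R) * u = 1 := u.inv_mul
  linear_combination ((u⁻¹ : Rˣ) : R) ^ 3 * hu - (W.a₂ - s * W.a₁ + 3 * x - s ^ 2) *
    ((u⁻¹ : Rˣ) : R) ^ 2 * hinv

end CommRing

section Field

variable {F : Type*} [Field F] [DecidableEq F] {W : Affine F} {x y : F}

lemma variableChange_a₄_eq_zero_of_slope (hy : y ≠ W.negY x y) (u : Fˣ) :
    ((⟨u, x, W.slope x x y y, y⟩ : VariableChange F) • W).a₄ = 0 := by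
  have hslope : W.slope x x y y * (y - W.negY x y) =
      3 * x ^ 2 + 2 * W.a₂ * x + W.a₄ - W.a₁ * y := by
    rw [slope_of_Y_ne rfl hy, div_mul_cancel₀ _ (sub_ne_zero.mpr hy)]
  rw [variableChange_a₄]
  simp only [negY] at hslope
  linear_combination (-((u⁻¹ : Fˣ) : F) ^ 4) * hslope

lemma Y_ne_negY_of_two_nsmul_ne_zero (h : W.Nonsingular x y) (h₂ : 2 • Point.some x y h ≠ 0) :
    y ≠ W.negY x y := fun hy => h₂ (by rw [two_nsmul, Point.add_self_of_Y_eq hy])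

lemma addX_slope_ne_of_three_nsmul_ne_zero (h : W.Nonsingular x y) (hy : y ≠ W.negY x y)
    (h₃ : 3 • Point.some x y h ≠ 0) : W.addX x x (W.slope x x y y) ≠ x := by
  intro hx
  have h₂ : 2 • Point.some x y h = Point.some _ _ (nonsingular_add h h fun hxy => hy hxy.2) := by
    rw [two_nsmul, Point.add_self_of_Y_ne hy]
  rcases Point.X_eq_iff.mp hx with h₂P | h₂P <;> rw [← h₂] at h₂P
  · rw [two_nsmul, add_eq_left] at h₂P
    exact Point.some_ne_zero h h₂P
  · exact h₃ (by rw [succ_nsmul, h₂P, neg_add_cancel])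

end Field

end WeierstrassCurve

open Classical in
/-- The change of coordinates `C` sends an affine point (x, y) to
((x - r) / u², (y - s(x - r) - t) / u³). -/
theorem stmt_0_general {K : Type*} [Field K] (W : WeierstrassCurve.Affine K)
    (P : W.Point) (N : ℕ) (hN : 4 ≤ N) (hP : addOrderOf P = N) :
    ∃ (b c : K) (C : WeierstrassCurve.VariableChange K) (x y : K) (h : W.Nonsingular x y),
      P = WeierstrassCurve.Affine.Point.some x y h ∧
      C • W = Ebc b c ∧
      (x - C.r) / (C.u : K) ^ 2 = 0 ∧
      (y - C.s * (x - C.r) - C.t) / (C.u : K) ^ 3 = 0 := by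
  have hP₀ : ∀ n, n ≠ 0 → n < 4 → n • P ≠ 0 := fun n hn h4 =>
    nsmul_ne_zero_of_lt_addOrderOf hn (by omega)
  obtain ⟨x, y, h, rfl⟩ : ∃ x y h, P = Point.some x y h := by
    cases P with
    | zero => exact absurd (one_nsmul _) (hP₀ 1 one_ne_zero (by omega))
    | some x y h => exact ⟨x, y, h, rfl⟩
  have hy := Y_ne_negY_of_two_nsmul_ne_zero h (hP₀ 2 two_ne_zero (by omega))
  have hx := addX_slope_ne_of_three_nsmul_ne_zero h hy (hP₀ 3 three_ne_zero (by omega))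
  set s := W.slope x x y y
  set u : Kˣ := Units.mk0 ((y - W.negY x y) / (x - W.addX x x s))
    (div_ne_zero (sub_ne_zero.mpr hy) (sub_ne_zero.mpr hx.symm))
  have hu : u * (x - W.addX x x s) = y - W.negY x y :=
    div_mul_cancel₀ _ (sub_ne_zero.mpr hx.symm)
  exact ⟨_, _, ⟨u, x, s, y⟩, x, y, h, rfl,
    eq_Ebc_of_a₂_eq_a₃ (variableChange_a₂_eq_a₃ hu) (variableChange_a₄_eq_zero_of_slope hy u)
      (variableChange_a₆_eq_zero h.1 u s),
    by simp, by simp⟩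

open Classical in
/-- Kubert's theorem: an elliptic curve with a rational point of order N ≥ 4 admits an
admissible change of Weierstrass coordinates putting it in Kubert-Tate normal form E(b,c),
with the point sent to (0,0).  The change of coordinates sends an affine point (x, y) to
((x - r) / u², (y - s(x - r) - t) / u³). -/
theorem stmt_0 {K : Type*} [Field K] (W : WeierstrassCurve.Affine K) (hΔ : W.Δ ≠ 0)
    (P : W.Point) (N : ℕ) (hN : 4 ≤ N) (hP : addOrderOf P = N) :
    ∃ (b c : K) (C : WeierstrassCurve.VariableChange K) (x y : K) (h : W.Nonsingular x y),
      P = WeierstrassCurve.Affine.Point.some x y h ∧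
      C • W = Ebc b c ∧
      (x - C.r) / (C.u : K) ^ 2 = 0 ∧
      (y - C.s * (x - C.r) - C.t) / (C.u : K) ^ 3 = 0 :=
  stmt_0_general W P N hN hP
end

section
/- Let K be a field and b, c ∈ K such that the Kubert-Tate curve E(b,c) has nonzero discriminant. Then in the group of K-rational points of E(b,c), one has 2·(0,0) = (b, bc) and 3·(0,0) = (c, b−c). -/
/-- The point `(0, 0)` on `E(b,c)`, which is nonsingular since the discriminant is nonzero. -/
noncomputable def P₀ {K : Type*} [Field K] (b c : K) (hΔ : (Ebc b c).Δ ≠ 0) :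
    (Ebc b c).Point :=
  .some _ _ (((Ebc b c).equation_iff_nonsingular_of_Δ_ne_zero hΔ).mp ((Ebc b c).equation_zero.mpr rfl))

/-! The tangent to `E(b,c)` at `P = (0,0)` is the horizontal line `y = 0`, which meets the curve
again at `x = b`; reflecting gives `2P = (b, bc)`. The chord through `2P` and `P` is `y = cx`,
whose third intersection has `x = c`, and reflecting gives `3P = (c, b - c)`. Everything else is
the observation that `b ∣ Δ`, so that `b ≠ 0` and these lines are well defined. -/

namespace Ebc

open WeierstrassCurve WeierstrassCurve.Affine

variable {K : Type*}

section CommRing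

variable [CommRing K] (b c : K)

lemma Δ_eq :
    (Ebc b c).Δ = b ^ 3 * (16 * b ^ 2 - b * (8 * c ^ 2 + 20 * c - 1) - c * (1 - c) ^ 3) := by
  simp only [Δ, b₂, b₄, b₆, b₈, Ebc]
  ring

lemma equation_b_mul_c : (Ebc b c).Equation b (b * c) := by
  rw [equation_iff]
  simp only [Ebc]
  ring

lemma equation_c_sub : (Ebc b c).Equation c (b - c) := by
  rw [equation_iff]
  simp only [Ebc]
  ring

end CommRing

variable [Field K] {b c : K}

lemma ne_zero_of_Δ_ne_zero (hΔ : (Ebc b c).Δ ≠ 0) : b ≠ 0 := by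
  rintro rfl
  simp [Δ_eq] at hΔ

lemma zero_ne_negY_zero (hb : b ≠ 0) : (0 : K) ≠ (Ebc b c).negY 0 0 := by
  simpa [negY, Ebc] using hb.symm

variable [DecidableEq K]

lemma slope_zero_zero (hb : b ≠ 0) : (Ebc b c).slope 0 0 0 0 = 0 := by
  rw [slope_of_Y_ne rfl (zero_ne_negY_zero hb)]
  simp [Ebc]

lemma slope_b_zero (hb : b ≠ 0) : (Ebc b c).slope b 0 (b * c) 0 = c := by
  rw [slope_of_X_ne hb]
  field_simp
  ring

lemma two_smul_P₀ (hΔ : (Ebc b c).Δ ≠ 0) :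
    2 • P₀ b c hΔ =
      .some _ _
        (((Ebc b c).equation_iff_nonsingular_of_Δ_ne_zero hΔ).mp (equation_b_mul_c b c)) := by
  have hb := ne_zero_of_Δ_ne_zero hΔ
  rw [two_smul, P₀, Point.add_of_Y_ne (zero_ne_negY_zero hb)]
  congr 1
  · rw [addX, slope_zero_zero hb]
    simp only [Ebc]
    ring
  · rw [addY, negAddY, addX, slope_zero_zero hb]
    simp only [negY, Ebc]
    ring

lemma three_smul_P₀ (hΔ : (Ebc b c).Δ ≠ 0) :
    3 • P₀ b c hΔ =
      .some _ _
        (((Ebc b c).equation_iff_nonsingular_of_Δ_ne_zero hΔ).mp (equation_c_sub b c)) := by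
  have hb := ne_zero_of_Δ_ne_zero hΔ
  rw [succ_nsmul, two_smul_P₀, P₀, Point.add_of_X_ne hb]
  congr 1
  · rw [addX, slope_b_zero hb]
    simp only [Ebc]
    ring
  · rw [addY, negAddY, addX, slope_b_zero hb]
    simp only [negY, Ebc]
    ring

end Ebc

open Classical in
theorem stmt_2 {K : Type*} [Field K] (b c : K) (hΔ : (Ebc b c).Δ ≠ 0) :
    (∃ h : (Ebc b c).Nonsingular b (b * c),
      2 • P₀ b c hΔ = WeierstrassCurve.Affine.Point.some _ _ h) ∧
    (∃ h : (Ebc b c).Nonsingular c (b - c),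
      3 • P₀ b c hΔ = WeierstrassCurve.Affine.Point.some _ _ h) := by
  exact ⟨⟨_, Ebc.two_smul_P₀ hΔ⟩, ⟨_, Ebc.three_smul_P₀ hΔ⟩⟩
end

section
/- Let K = ℚ(ζ₃) be the third cyclotomic field with ζ₃ a primitive third root of unity, and let E be the elliptic curve over K given by the short Weierstrass equation y² = x³ − (1296ζ₃ + 6480). Then the point (12(1 − ζ₃), −108ζ₃) lies on E and has order exactly 7. -/
/-- The short Weierstrass curve y^2 = x^3 + Ax + B. -/
def Wshort {K : Type*} [CommRing K] (A B : K) : WeierstrassCurve.Affine K :=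
  { a₁ := 0, a₂ := 0, a₃ := 0, a₄ := A, a₆ := B }

/-!
Write `P = (12(1 - ζ), -108ζ)`. The chord-tangent formulas, simplified with `ζ² + ζ + 1 = 0`,
give `2P = (12 + 24ζ, -108ζ)` (tangent slope `6`), `3P = (-24 - 12ζ, 108ζ)` (horizontal chord)
and `4P = (-24 - 12ζ, -108ζ)` (chord slope `-6ζ`). Thus `4P = -3P`, so `7P = 0`, and since `7` is
prime and `P ≠ 0`, `P` has order `7`.
-/

open WeierstrassCurve WeierstrassCurve.Affine

lemma IsPrimitiveRoot.sq_add_self_add_one_eq_zero {R : Type*} [CommRing R] [IsDomain R] {ζ : R}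
    (hζ : IsPrimitiveRoot ζ 3) : ζ ^ 2 + ζ + 1 = 0 := by
  have h := hζ.geom_sum_eq_zero (by norm_num)
  simp only [Finset.sum_range_succ, Finset.sum_range_zero] at h
  linear_combination h

namespace Wshort

variable {K : Type*} [Field K] {A B x y x₁ y₁ x₂ y₂ x₃ y₃ ℓ : K}

lemma Δ_eq (A B : K) : (Wshort A B).Δ = -16 * (4 * A ^ 3 + 27 * B ^ 2) := by
  simp only [Wshort, Δ, b₂, b₄, b₆, b₈]
  ring

lemma equation_iff : (Wshort A B).Equation x y ↔ y ^ 2 = x ^ 3 + A * x + B := by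
  rw [Affine.equation_iff]
  simp only [Wshort]
  constructor <;> intro h <;> linear_combination h

lemma nonsingular_of_eq (hΔ : (Wshort A B).Δ ≠ 0) (h : y ^ 2 = x ^ 3 + A * x + B) :
    (Wshort A B).Nonsingular x y :=
  (equation_iff_nonsingular_of_Δ_ne_zero hΔ).mp (equation_iff.mpr h)

variable [DecidableEq K]

lemma some_add_some_of_X_ne {h₁ : (Wshort A B).Nonsingular x₁ y₁}
    {h₂ : (Wshort A B).Nonsingular x₂ y₂} {h₃ : (Wshort A B).Nonsingular x₃ y₃} (hx : x₁ ≠ x₂)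
    (hℓ : y₁ - y₂ = ℓ * (x₁ - x₂)) (hx₃ : x₃ = ℓ ^ 2 - x₁ - x₂)
    (hy₃ : y₃ = ℓ * (x₁ - x₃) - y₁) :
    Point.some _ _ h₁ + Point.some _ _ h₂ = Point.some _ _ h₃ := by
  have hslope : (Wshort A B).slope x₁ x₂ y₁ y₂ = ℓ := by
    rw [slope_of_X_ne hx, div_eq_iff (sub_ne_zero.mpr hx), hℓ]
  rw [Point.add_of_X_ne hx]
  simp only [Point.some.injEq, addY, negAddY, addX, hslope]
  simp only [negY, Wshort, hx₃, hy₃]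
  constructor <;> ring

lemma some_add_self {h₁ : (Wshort A B).Nonsingular x₁ y₁} {h₃ : (Wshort A B).Nonsingular x₃ y₃}
    (hy : y₁ ≠ -y₁) (hℓ : 2 * y₁ * ℓ = 3 * x₁ ^ 2 + A) (hx₃ : x₃ = ℓ ^ 2 - 2 * x₁)
    (hy₃ : y₃ = ℓ * (x₁ - x₃) - y₁) :
    Point.some _ _ h₁ + Point.some _ _ h₁ = Point.some _ _ h₃ := by
  have hy' : y₁ ≠ (Wshort A B).negY x₁ y₁ := by simpa only [negY, Wshort, zero_mul, sub_zero] using hy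
  have hslope : (Wshort A B).slope x₁ x₁ y₁ y₁ = ℓ := by
    rw [slope_of_Y_ne rfl hy', eq_comm, eq_div_iff (sub_ne_zero.mpr hy')]
    simp only [negY, Wshort]
    linear_combination hℓ
  rw [Point.add_self_of_Y_ne hy']
  simp only [Point.some.injEq, addY, negAddY, addX, hslope]
  simp only [negY, Wshort, hx₃, hy₃]
  constructor <;> ring

lemma some_add_some_neg {h₁ : (Wshort A B).Nonsingular x y}
    {h₂ : (Wshort A B).Nonsingular x (-y)} : Point.some _ _ h₁ + Point.some _ _ h₂ = 0 :=
  Point.add_of_Y_eq rfl (by simp only [negY, Wshort]; ring)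

end Wshort

section TorsionPoint

variable {K : Type*} [Field K] [CharZero K] {ζ : K}

lemma Δ_ne_zero_of_sq_add_self_add_one_eq_zero (hζ : ζ ^ 2 + ζ + 1 = 0) :
    (Wshort 0 (-(1296 * ζ + 6480))).Δ ≠ 0 := by
  rw [Wshort.Δ_eq]
  intro hΔ
  have hζ5 : ζ + 5 = 0 := by
    simpa using (show (-16 * 27 * 1296 ^ 2 : K) * (ζ + 5) ^ 2 = 0 by linear_combination hΔ)
  have : (21 : K) = 0 := by linear_combination hζ - (ζ - 4) * hζ5
  norm_num at this

lemma nonsingular_of_sq_add_self_add_one_eq_zero (hζ : ζ ^ 2 + ζ + 1 = 0) :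
    (Wshort 0 (-(1296 * ζ + 6480))).Nonsingular (12 * (1 - ζ)) (-108 * ζ) :=
  Wshort.nonsingular_of_eq (Δ_ne_zero_of_sq_add_self_add_one_eq_zero hζ)
    (by linear_combination (1728 * ζ + 4752) * hζ)

lemma nsmul_seven_some_eq_zero [DecidableEq K] (hζ : ζ ^ 2 + ζ + 1 = 0)
    (h : (Wshort 0 (-(1296 * ζ + 6480))).Nonsingular (12 * (1 - ζ)) (-108 * ζ)) :
    7 • Point.some _ _ h = 0 := by
  have hΔ := Δ_ne_zero_of_sq_add_self_add_one_eq_zero hζ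
  have hζ0 : ζ ≠ 0 := by rintro rfl; norm_num at hζ
  have h₂ : (Wshort 0 (-(1296 * ζ + 6480))).Nonsingular (12 + 24 * ζ) (-108 * ζ) :=
    Wshort.nonsingular_of_eq hΔ (by linear_combination (-13824 * ζ + 4752) * hζ)
  have h₃ : (Wshort 0 (-(1296 * ζ + 6480))).Nonsingular (-24 - 12 * ζ) (108 * ζ) :=
    Wshort.nonsingular_of_eq hΔ (by linear_combination (1728 * ζ + 20304) * hζ)
  have h₄ : (Wshort 0 (-(1296 * ζ + 6480))).Nonsingular (-24 - 12 * ζ) (-(108 * ζ)) :=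
    Wshort.nonsingular_of_eq hΔ (by linear_combination (1728 * ζ + 20304) * hζ)
  have two : Point.some _ _ h + Point.some _ _ h = Point.some _ _ h₂ :=
    Wshort.some_add_self (ℓ := 6) (fun h' => hζ0 (by linear_combination -h' / 216))
      (by linear_combination -432 * hζ) (by ring) (by ring)
  have three : Point.some _ _ h₂ + Point.some _ _ h = Point.some _ _ h₃ :=
    Wshort.some_add_some_of_X_ne (ℓ := 0) (fun h' => hζ0 (by linear_combination h' / 36))
      (by ring) (by ring) (by ring)
  have four : Point.some _ _ h₃ + Point.some _ _ h = Point.some _ _ h₄ :=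
    Wshort.some_add_some_of_X_ne (ℓ := -6 * ζ) (fun h' => by
      have h36 : (36 : K) = 0 := by linear_combination -h'
      norm_num at h36)
      (by ring) (by linear_combination -36 * hζ) (by ring)
  calc 7 • Point.some _ _ h
      = (Point.some _ _ h + Point.some _ _ h + Point.some _ _ h) +
          (Point.some _ _ h + Point.some _ _ h + Point.some _ _ h + Point.some _ _ h) := by
        abel
    _ = 0 := by rw [two, three, four, Wshort.some_add_some_neg]

end TorsionPoint

open Classical in
theorem stmt_11 (ζ : CyclotomicField 3 ℚ) (hζ : IsPrimitiveRoot ζ 3) :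
    ∃ h : (Wshort 0 (-(1296 * ζ + 6480))).Nonsingular (12 * (1 - ζ)) (-108 * ζ),
      addOrderOf (WeierstrassCurve.Affine.Point.some _ _ h) = 7 := by
  have hrel := hζ.sq_add_self_add_one_eq_zero
  refine ⟨nonsingular_of_sq_add_self_add_one_eq_zero hrel, ?_⟩
  have : Fact (Nat.Prime 7) := ⟨by norm_num⟩
  exact addOrderOf_eq_prime (nsmul_seven_some_eq_zero hrel _) (Point.some_ne_zero _)
end

section
/- Let K = ℚ[b]/(b³ − 99b² − 90b − 9), a cubic number field, let b denote the image of the variable in K, and set c = (−2b² + 318b − 75)/753 ∈ K. Then the Kubert-Tate curve E(b, c) over K, given by y² + (1−c)xy − by = x³ − bx², is an elliptic curve (its discriminant is nonzero) and the point (0,0) on it has order exactly 9. -/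
open Polynomial

/-- The cubic number field K = ℚ[b]/(b³ - 99b² - 90b - 9); the defining polynomial is
irreducible over ℚ, which is recorded as the `Fact` hypothesis below. -/
def K19 : Type := AdjoinRoot (X ^ 3 - 99 * X ^ 2 - 90 * X - 9 : ℚ[X])

noncomputable instance [Fact (Irreducible (X ^ 3 - 99 * X ^ 2 - 90 * X - 9 : ℚ[X]))] :
    Field K19 :=
  inferInstanceAs (Field (AdjoinRoot _))

/-- The image b of the variable in K = ℚ[b]/(b³ - 99b² - 90b - 9). -/
noncomputable def b19 : K19 := AdjoinRoot.root _

/-- The element c = (-2b² + 318b - 75)/753 of K. -/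
noncomputable def c19 [Fact (Irreducible (X ^ 3 - 99 * X ^ 2 - 90 * X - 9 : ℚ[X]))] : K19 :=
  (-2 * b19 ^ 2 + 318 * b19 - 75) / 753

/-
On `E(b, c)` the point `P = (0, 0)` has `2P = (b, bc)` and `3P = (c, b - c)`. Kubert's
parametrisation `c = f²(f - 1)`, `b = c(f² - f + 1)` is exactly the condition that `3P` be a flex,
i.e. a point of order 3, so that `P` has order 9. Here `f = c² / (b - c)` is a root of
`X³ - 3X² + 1`, and `Δ = f⁹ (f - 1)⁹ (f² - f + 1)³ (f³ - 6f² + 3f + 1)` does not vanish because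
none of its factors shares a root with that irreducible cubic.
-/

open WeierstrassCurve.Affine

lemma exists_some_eq_some_of_eq {R : Type*} [CommRing R] {W : WeierstrassCurve.Affine R}
    {x y x' y' : R} (h : W.Nonsingular x y) (hx : x = x') (hy : y = y') :
    ∃ h' : W.Nonsingular x' y', Point.some x y h = Point.some x' y' h' := by
  subst hx hy
  exact ⟨h, rfl⟩

namespace Ebc

section CommRing

variable {R : Type*} [CommRing R] {b c : R}

lemma nonsingular_zero_zero_iff : (Ebc b c).Nonsingular 0 0 ↔ b ≠ 0 := by
  simp [nonsingular_zero, Ebc]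

/- Kubert's parametrisation of the Tate normal forms on which `(0, 0)` has order 9. -/
lemma Δ_eq_of_kubert {f : R} (hc : c = f ^ 2 * (f - 1)) (hb : b = c * (f ^ 2 - f + 1)) :
    (Ebc b c).Δ = f ^ 9 * (f - 1) ^ 9 * (f ^ 2 - f + 1) ^ 3 * (f ^ 3 - 6 * f ^ 2 + 3 * f + 1) := by
  subst hb hc
  simp only [WeierstrassCurve.Δ, WeierstrassCurve.b₂, WeierstrassCurve.b₄,
      WeierstrassCurve.b₆, WeierstrassCurve.b₈, Ebc]
  ring

end CommRing

variable {F : Type*} [Field F] {b c : F}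

lemma Δ_ne_zero_of_kubert {f : F} (h3 : (3 : F) ≠ 0) (hf : f ^ 3 - 3 * f ^ 2 + 1 = 0)
    (hc : c = f ^ 2 * (f - 1)) (hb : b = c * (f ^ 2 - f + 1)) : (Ebc b c).Δ ≠ 0 := by
  have hf₀ : f ≠ 0 := by
    rintro rfl
    norm_num at hf
  have hf₁ : f - 1 ≠ 0 := by
    intro h
    obtain rfl : f = 1 := by linear_combination h
    norm_num at hf
  have hf₂ : f ^ 2 - f + 1 ≠ 0 := by
    intro h
    have : 3 * f ^ 2 = 0 := by linear_combination (f + 1) * h - hf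
    simp_all
  have hf₃ : f ^ 3 - 6 * f ^ 2 + 3 * f + 1 = -3 * f * (f - 1) := by linear_combination hf
  rw [Δ_eq_of_kubert hc hb, hf₃]
  simp [hf₀, hf₁, hf₂, h3]

variable [DecidableEq F]

lemma two_nsmul_some_zero_zero (h₀ : (Ebc b c).Nonsingular 0 0) :
    ∃ h₂ : (Ebc b c).Nonsingular b (b * c), 2 • Point.some 0 0 h₀ = Point.some b (b * c) h₂ := by
  have hy : (0 : F) ≠ (Ebc b c).negY 0 0 := by
    simpa [negY, Ebc, eq_comm] using nonsingular_zero_zero_iff.mp h₀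
  have hℓ : (Ebc b c).slope 0 0 0 0 = 0 := by rw [slope_of_Y_ne rfl hy]; simp [Ebc]
  rw [two_nsmul, Point.add_self_of_Y_ne hy]
  refine exists_some_eq_some_of_eq _ ?_ ?_ <;> rw [hℓ] <;>
    simp only [addX, addY, negAddY, negY, Ebc] <;> ring

lemma three_nsmul_some_zero_zero (h₀ : (Ebc b c).Nonsingular 0 0) :
    ∃ h₃ : (Ebc b c).Nonsingular c (b - c), 3 • Point.some 0 0 h₀ = Point.some c (b - c) h₃ := by
  have hb := nonsingular_zero_zero_iff.mp h₀
  obtain ⟨h₂, e₂⟩ := two_nsmul_some_zero_zero h₀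
  have hℓ : (Ebc b c).slope b 0 (b * c) 0 = c := by
    rw [slope_of_X_ne hb, div_eq_iff (sub_ne_zero.mpr hb)]; ring
  rw [succ_nsmul, e₂, Point.add_of_X_ne hb]
  refine exists_some_eq_some_of_eq _ ?_ ?_ <;> rw [hℓ] <;>
    simp only [addX, addY, negAddY, negY, Ebc] <;> ring

lemma three_nsmul_some_of_kubert {f : F} (hc : c = f ^ 2 * (f - 1))
    (hb : b = c * (f ^ 2 - f + 1)) (hb₀ : b ≠ 0) (h₃ : (Ebc b c).Nonsingular c (b - c)) :
    3 • Point.some c (b - c) h₃ = 0 := by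
  have hf : f ^ 3 * (f - 1) ^ 3 ≠ 0 := by
    rw [hb, hc] at hb₀
    simp only [ne_eq, mul_eq_zero, pow_eq_zero_iff, OfNat.ofNat_ne_zero, not_false_eq_true] at hb₀ ⊢
    tauto
  have hy : b - c ≠ (Ebc b c).negY c (b - c) := by
    intro h
    apply hf
    simp only [negY, Ebc] at h
    subst hb hc
    linear_combination -h
  -- `(c, b - c)` is a flex: the tangent there meets the curve in no other point.
  have hℓ : (Ebc b c).slope c c (b - c) (b - c) = f ^ 2 - 1 := by
    rw [slope_of_Y_ne rfl hy, div_eq_iff (sub_ne_zero.mpr hy)]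
    simp only [negY, Ebc]
    subst hb hc
    ring
  have hx : (Ebc b c).addX c c (f ^ 2 - 1) = c := by
    simp only [addX, Ebc]
    subst hb hc
    ring
  rw [succ_nsmul, two_nsmul, Point.add_self_of_Y_ne hy]
  refine Point.add_of_Y_eq (by rw [hℓ, hx]) ?_
  rw [hℓ, addY, negAddY, hx]
  simp only [negY, Ebc]
  ring

theorem addOrderOf_some_zero_zero_of_kubert {f : F} (hc : c = f ^ 2 * (f - 1))
    (hb : b = c * (f ^ 2 - f + 1)) (h₀ : (Ebc b c).Nonsingular 0 0) :
    addOrderOf (Point.some 0 0 h₀) = 9 := by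
  obtain ⟨h₃, e₃⟩ := three_nsmul_some_zero_zero h₀
  have hb₀ := nonsingular_zero_zero_iff.mp h₀
  refine addOrderOf_eq_prime_pow (p := 3) (n := 1) ?_ ?_
  · rw [pow_one, e₃]
    exact Point.some_ne_zero h₃
  · rw [pow_two, mul_nsmul, e₃, three_nsmul_some_of_kubert hc hb hb₀]

end Ebc

section K19

variable [Fact (Irreducible (X ^ 3 - 99 * X ^ 2 - 90 * X - 9 : ℚ[X]))]

noncomputable instance : Algebra ℚ K19 := inferInstanceAs (Algebra ℚ (AdjoinRoot _))

instance : CharZero K19 := charZero_of_injective_algebraMap (algebraMap ℚ K19).injective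

lemma b19_root : b19 ^ 3 - 99 * b19 ^ 2 - 90 * b19 - 9 = 0 := by
  have h := AdjoinRoot.eval₂_root (X ^ 3 - 99 * X ^ 2 - 90 * X - 9 : ℚ[X])
  simp only [eval₂_sub, eval₂_pow, eval₂_mul, eval₂_X, eval₂_ofNat] at h
  exact h

/- Kubert's parameter `c ^ 2 / (b - c)` of `(b19, c19)`; its minimal polynomial is
`X ^ 3 - 3 * X ^ 2 + 1`. -/
noncomputable def f19 : K19 := (642 + 1314 * b19 - 13 * b19 ^ 2) / 753

lemma f19_cube : f19 ^ 3 - 3 * f19 ^ 2 + 1 = 0 := by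
  rw [f19]
  linear_combination
    (26612379 - 23170446 * b19 + 448695 * b19 ^ 2 - 2197 * b19 ^ 3) / 753 ^ 3 * b19_root

lemma c19_eq : c19 = f19 ^ 2 * (f19 - 1) := by
  rw [c19, f19]
  linear_combination
    (-358281 + 22915932 * b19 - 448695 * b19 ^ 2 + 2197 * b19 ^ 3) / 753 ^ 3 * b19_root

lemma b19_eq : b19 = c19 * (f19 ^ 2 - f19 + 1) := by
  rw [c19, f19]
  linear_combination
    (-4131225 + 5574441 * b19 - 88608 * b19 ^ 2 + 338 * b19 ^ 3) / 753 ^ 3 * b19_root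

end K19

open Classical in
theorem stmt_19 [Fact (Irreducible (X ^ 3 - 99 * X ^ 2 - 90 * X - 9 : ℚ[X]))] :
    (Ebc b19 c19).Δ ≠ 0 ∧
    ∃ h : (Ebc b19 c19).Nonsingular 0 0,
      addOrderOf (WeierstrassCurve.Affine.Point.some 0 0 h) = 9 := by
  have hΔ := Ebc.Δ_ne_zero_of_kubert three_ne_zero f19_cube c19_eq b19_eq
  have h₀ : (Ebc b19 c19).Nonsingular 0 0 :=
    (equation_iff_nonsingular_of_Δ_ne_zero hΔ).mp (by simp [equation_zero, Ebc])
  exact ⟨hΔ, h₀, Ebc.addOrderOf_some_zero_zero_of_kubert c19_eq b19_eq h₀⟩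
end
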